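/- Lower bound for arbitrary approximation spaces (optimality of spectral spaces, one direction; cf. Theorem 3.3 of Babuška–Lipton as used in Section 5.2): With V, ⟨·,·⟩, A, eigenvalues 0 < λ₁ ≤ … ≤ λ_N, and orthonormal eigenbasis ψ₁,…,ψ_N as in the context, for every 1 ≤ L < N and every linear subspace W ⊆ V with dim W = L, there exists u ∈ V with u ≠ 0 such that for every w ∈ W, λ_{L+1} ‖u − w‖² ≥ ⟨A u, u⟩. -/

import Mathlib

open RealInnerProductSpace

/-!
Let `S` be the span of the first `L + 1` eigenvectors. Since `dim S = L + 1 > dim W`, the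
orthogonal projection onto `W` is not injective on `S`, so some `u ≠ 0` in `S` is orthogonal
to `W`. On `S` the Rayleigh quotient is at most `λ_{L+1}`, and orthogonality to `W` gives
`‖u‖ ≤ ‖u - w‖` for every `w ∈ W`.
-/

open Module Submodule

theorem Submodule.exists_mem_orthogonal_ne_zero_of_finrank_lt {𝕜 E : Type*} [RCLike 𝕜]
    [NormedAddCommGroup E] [InnerProductSpace 𝕜 E] {S W : Submodule 𝕜 E}
    [FiniteDimensional 𝕜 S] [FiniteDimensional 𝕜 W] (h : finrank 𝕜 W < finrank 𝕜 S) :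
    ∃ u ∈ S, u ∈ Wᗮ ∧ u ≠ 0 := by
  obtain ⟨x, hx, hx0⟩ := exists_mem_ne_zero_of_ne_bot <| LinearMap.ker_ne_bot_of_finrank_lt
    (f := W.orthogonalProjectionOnto.toLinearMap ∘ₗ S.subtype) h
  refine ⟨x, x.2, orthogonalProjectionOnto_eq_zero_iff.mp hx, ?_⟩
  exact_mod_cast hx0

theorem Orthonormal.inner_map_self_le_of_mem_span {E ι : Type*} [NormedAddCommGroup E]
    [InnerProductSpace ℝ E] [Fintype ι] {φ : ι → E} (hφ : Orthonormal ℝ φ) {T : E →ₗ[ℝ] E}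
    {μ : ι → ℝ} (hT : ∀ i, T (φ i) = μ i • φ i) {c : ℝ} (hμ : ∀ i, μ i ≤ c) {u : E}
    (hu : u ∈ span ℝ (Set.range φ)) :
    ⟪T u, u⟫ ≤ c * ‖u‖ ^ 2 := by
  obtain ⟨a, rfl⟩ := mem_span_range_iff_exists_fun ℝ |>.mp hu
  have hTu : T (∑ i, a i • φ i) = ∑ i, (μ i * a i) • φ i := by
    simp only [map_sum, map_smul, hT, smul_smul, mul_comm]
  rw [hTu, ← real_inner_self_eq_norm_sq, hφ.inner_sum, hφ.inner_sum, Finset.mul_sum]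
  refine Finset.sum_le_sum fun i _ => ?_
  rw [conj_trivial, mul_assoc]
  exact mul_le_mul_of_nonneg_right (hμ i) (mul_self_nonneg _)

theorem norm_le_norm_sub_of_inner_eq_zero {E : Type*} [NormedAddCommGroup E]
    [InnerProductSpace ℝ E] {u w : E} (h : ⟪u, w⟫ = 0) : ‖u‖ ≤ ‖u - w‖ := by
  rw [mul_self_le_mul_self_iff (norm_nonneg _) (norm_nonneg _),
    norm_sub_sq_eq_norm_sq_add_norm_sq_real h]
  exact le_add_of_nonneg_right (mul_self_nonneg _)

theorem stmt_6_general
    {V : Type*} [NormedAddCommGroup V] [InnerProductSpace ℝ V] [FiniteDimensional ℝ V]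
    (N : ℕ)
    (A : V →ₗ[ℝ] V)
    (lam : Fin N → ℝ) (hlam0 : ∀ m, 0 < lam m) (hmono : Monotone lam)
    (ψ : Fin N → V) (hON : Orthonormal ℝ ψ)
    (heig : ∀ m, A (ψ m) = lam m • ψ m)
    (L : ℕ) (hLN : L < N)
    (W : Submodule ℝ V) (hW : Module.finrank ℝ W = L) :
    ∃ u : V, u ≠ 0 ∧ ∀ w ∈ W, ⟪A u, u⟫ ≤ lam ⟨L, hLN⟩ * ‖u - w‖ ^ 2 := by
  let φ : Fin (L + 1) → V := fun i => ψ (Fin.castLE hLN i)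
  have hφ : Orthonormal ℝ φ := hON.comp _ (Fin.castLE_injective hLN)
  obtain ⟨u, huS, huW, hu0⟩ :=
    exists_mem_orthogonal_ne_zero_of_finrank_lt (S := span ℝ (Set.range φ)) (W := W) <| by
      rw [finrank_span_eq_card hφ.linearIndependent, hW, Fintype.card_fin]
      exact L.lt_succ_self
  refine ⟨u, hu0, fun w hw => ?_⟩
  have hRayleigh : ⟪A u, u⟫ ≤ lam ⟨L, hLN⟩ * ‖u‖ ^ 2 :=
    hφ.inner_map_self_le_of_mem_span (fun i => heig _)
      (fun i => hmono (Fin.mk_le_mk.mpr (Nat.lt_succ_iff.mp i.2))) huS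
  have hnorm : ‖u‖ ≤ ‖u - w‖ :=
    norm_le_norm_sub_of_inner_eq_zero (real_inner_comm u w ▸ huW w hw)
  calc ⟪A u, u⟫ ≤ lam ⟨L, hLN⟩ * ‖u‖ ^ 2 := hRayleigh
    _ ≤ lam ⟨L, hLN⟩ * ‖u - w‖ ^ 2 := by gcongr; exact (hlam0 _).le

/-- Lower bound for arbitrary approximation spaces (optimality of spectral spaces,
one direction; cf. Theorem 3.3 of Babuška–Lipton). -/
theorem stmt_6
    {V : Type*} [NormedAddCommGroup V] [InnerProductSpace ℝ V] [FiniteDimensional ℝ V]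
    (N : ℕ) (hdim : Module.finrank ℝ V = N)
    (A : V →ₗ[ℝ] V) (hA : A.IsSymmetric) (hApos : ∀ v : V, v ≠ 0 → 0 < ⟪A v, v⟫)
    (lam : Fin N → ℝ) (hlam0 : ∀ m, 0 < lam m) (hmono : Monotone lam)
    (ψ : Fin N → V) (hON : Orthonormal ℝ ψ)
    (heig : ∀ m, A (ψ m) = lam m • ψ m)
    (L : ℕ) (hL1 : 1 ≤ L) (hLN : L < N)
    (W : Submodule ℝ V) (hW : Module.finrank ℝ W = L) :
    ∃ u : V, u ≠ 0 ∧ ∀ w ∈ W, ⟪A u, u⟫ ≤ lam ⟨L, hLN⟩ * ‖u - w‖ ^ 2 :=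
  stmt_6_general N A lam hlam0 hmono ψ hON heig L hLN W hW
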